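/- arXiv:2204.12321 — 2 statements merged into one kernel-verified Lean document; each statement's English description precedes it below -/
import Mathlib

section
/- Let e be a p-unit in a lattice-normed Riesz space (X,p,E). Then a sequence x_n →^{st-up} 0 in X if and only if p(|x_n| ∧ e) →^{st-o} 0 in E. -/
open Filter Set
open scoped Classical

/-- The ratio `|{k < n : k ∈ K}| / n`, whose limit (when it exists) is the natural density. -/
noncomputable def natDensityRatio (K : Set ℕ) : ℕ → ℝ :=
  fun n => (((Finset.range n).filter (· ∈ K)).card : ℝ) / n

/-- `K ⊆ ℕ` has natural density one. -/
def HasDensityOne (K : Set ℕ) : Prop :=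
  Tendsto (natDensityRatio K) atTop (nhds 1)

/-- `K ⊆ ℕ` has natural density zero. -/
def HasDensityZero (K : Set ℕ) : Prop :=
  Tendsto (natDensityRatio K) atTop (nhds 0)

section Defs

variable {X E : Type*} [Lattice X] [AddCommGroup X] [Lattice E] [AddCommGroup E]

/-- A sequence is statistically decreasing to `0`: along an index set of density one it is
decreasing with infimum `0`. -/
def StatDecrToZero (a : ℕ → E) : Prop :=
  ∃ K : Set ℕ, HasDensityOne K ∧
    (∀ ⦃i⦄, i ∈ K → ∀ ⦃j⦄, j ∈ K → i ≤ j → a j ≤ a i) ∧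
    IsGLB (a '' K) 0

/-- A sequence `(q_n)` in `X` is statistically `p`-decreasing to `0`. -/
def StatPDecr (p : X → E) (q : ℕ → X) : Prop :=
  StatDecrToZero (fun n => p (q n))

/-- Statistical `p`-convergence of `(x_n)` to `x₀` in a lattice-normed Riesz space. -/
def StatPTendsto (p : X → E) (x : ℕ → X) (x₀ : X) : Prop :=
  ∃ q : ℕ → X, StatPDecr p q ∧
    ∃ K : Set ℕ, HasDensityOne K ∧ ∀ k ∈ K, p (x k - x₀) ≤ p (q k)

/-- Statistically unbounded `p`-convergence of `(x_n)` to `x₀`. -/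
def StatUPTendsto (p : X → E) (x : ℕ → X) (x₀ : X) : Prop :=
  ∀ u : X, 0 ≤ u → ∃ q : ℕ → X, StatPDecr p q ∧
    ∃ K : Set ℕ, HasDensityOne K ∧ ∀ k ∈ K, p (|x k - x₀| ⊓ u) ≤ p (q k)

/-- Order convergence to zero: domination by a decreasing sequence with infimum `0`. -/
def OrderTendstoZero (a : ℕ → E) : Prop :=
  ∃ q : ℕ → E, Antitone q ∧ IsGLB (Set.range q) 0 ∧ ∀ n, |a n| ≤ q n

end Defs

variable {X E : Type*} [Lattice X] [AddCommGroup X] [Module ℝ X]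
  [CovariantClass X X (· + ·) (· ≤ ·)]
  [ConditionallyCompleteLattice E] [AddCommGroup E] [Module ℝ E]
  [CovariantClass E E (· + ·) (· ≤ ·)]

/-- Statistical order convergence to `0` in `E`. -/
def StatOTendstoZero (a : ℕ → E) : Prop :=
  ∃ q : ℕ → E, StatDecrToZero q ∧
    ∃ K : Set ℕ, HasDensityOne K ∧ ∀ k ∈ K, |a k| ≤ q k

lemma myRatioNonneg (K : Set ℕ) (n : ℕ) : 0 ≤ natDensityRatio K n := by
  unfold natDensityRatio; positivity

lemma myRatioLeOne (K : Set ℕ) (n : ℕ) : natDensityRatio K n ≤ 1 := by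
  unfold natDensityRatio
  rcases Nat.eq_zero_or_pos n with h | h
  · simp [h]
  · rw [div_le_one (by exact_mod_cast h)]
    exact_mod_cast (Finset.card_filter_le _ _).trans (by simp)

lemma myDensityInter {A B : Set ℕ} (hA : HasDensityOne A) (hB : HasDensityOne B) :
    HasDensityOne (A ∩ B) := by
  have hlow : ∀ n, natDensityRatio A n + natDensityRatio B n - 1 ≤ natDensityRatio (A ∩ B) n := by
    intro n
    rcases Nat.eq_zero_or_pos n with h | h
    · simp [natDensityRatio, h]
    · have hnpos : (0:ℝ) < n := by exact_mod_cast h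
      have hcard : ((Finset.range n).filter (· ∈ A)).card + ((Finset.range n).filter (· ∈ B)).card
          ≤ ((Finset.range n).filter (· ∈ A ∩ B)).card + n := by
        have hset : (Finset.range n).filter (· ∈ A ∩ B)
            = (Finset.range n).filter (· ∈ A) ∩ (Finset.range n).filter (· ∈ B) := by
          ext k
          simp only [Finset.mem_filter, Finset.mem_inter, Set.mem_inter_iff]
          tauto
        rw [hset]
        have h1 := Finset.card_inter_add_card_union
          ((Finset.range n).filter (· ∈ A)) ((Finset.range n).filter (· ∈ B))
        have h2 : ((Finset.range n).filter (· ∈ A) ∪ (Finset.range n).filter (· ∈ B)).card ≤ n := by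
          have : (Finset.range n).filter (· ∈ A) ∪ (Finset.range n).filter (· ∈ B) ⊆ Finset.range n :=
            Finset.union_subset (Finset.filter_subset _ _) (Finset.filter_subset _ _)
          simpa using Finset.card_le_card this
        omega
      unfold natDensityRatio
      rw [← add_div, sub_le_iff_le_add, div_add' _ _ _ (ne_of_gt hnpos),
        div_le_div_iff_of_pos_right hnpos, one_mul]
      rw [show (@Finset.filter ℕ (fun x => x ∈ A ∩ B)
        (fun a => Classical.propDecidable (a ∈ A ∩ B)) (Finset.range n))
        = (Finset.range n).filter (· ∈ A ∩ B) from by congr]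
      exact_mod_cast hcard
  have h1 : Tendsto (fun n => natDensityRatio A n + natDensityRatio B n - 1) atTop (nhds 1) := by
    have := (hA.add hB).sub_const 1
    norm_num at this
    exact this
  exact tendsto_of_tendsto_of_tendsto_of_le_of_le h1 tendsto_const_nhds hlow
    (fun n => myRatioLeOne _ n)

lemma myDensityUnbounded {K : Set ℕ} (hK : HasDensityOne K) (N : ℕ) : ∃ k ∈ K, N ≤ k := by
  by_contra h
  push_neg at h
  have hle : ∀ n, natDensityRatio K n ≤ (N : ℝ) / n := by
    intro n
    rcases Nat.eq_zero_or_pos n with hn | hn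
    · simp [natDensityRatio, hn]
    · have hsub : (Finset.range n).filter (· ∈ K) ⊆ Finset.range N := by
        intro k hk
        rw [Finset.mem_filter] at hk
        exact Finset.mem_range.mpr (h k hk.2)
      unfold natDensityRatio
      gcongr
      exact_mod_cast Finset.card_le_card hsub |>.trans (by simp)
  have h0 : Tendsto (natDensityRatio K) atTop (nhds 0) :=
    tendsto_of_tendsto_of_tendsto_of_le_of_le tendsto_const_nhds
      (tendsto_const_div_atTop_nhds_zero_nat (N : ℝ)) (fun n => myRatioNonneg K n) hle
  have := tendsto_nhds_unique hK h0
  norm_num at this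

section LGroup
variable {G : Type*} [Lattice G] [AddCommGroup G] [CovariantClass G G (· + ·) (· ≤ ·)]

/-- In a lattice ordered abelian group, if a downward-directed set has infimum `0`,
then any element below all `n`-fold multiples of its members is `≤ 0`. -/
lemma myNsmulGLB : ∀ (n : ℕ) (S : Set G), S.Nonempty → DirectedOn (· ≥ ·) S → IsGLB S 0 →
    ∀ b : G, (∀ a ∈ S, b ≤ n • a) → b ≤ 0 := by
  intro n
  induction n with
  | zero =>
    rintro S ⟨a, ha⟩ _ _ b hb
    simpa using hb a ha
  | succ n ih =>
    intro S hne hdir hglb b hb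
    have key : ∀ a₀ ∈ S, b ≤ a₀ := by
      intro a₀ ha₀
      set S' := {a ∈ S | a ≤ a₀} with hS'
      have hne' : S'.Nonempty := ⟨a₀, ha₀, le_rfl⟩
      have hdir' : DirectedOn (· ≥ ·) S' := by
        rintro x ⟨hx, hx0⟩ y ⟨hy, _⟩
        obtain ⟨z, hz, hzx, hzy⟩ := hdir x hx y hy
        exact ⟨z, ⟨hz, le_trans hzx hx0⟩, hzx, hzy⟩
      have hglb' : IsGLB S' 0 := by
        constructor
        · rintro a ⟨ha, _⟩; exact hglb.1 ha
        · intro c hc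
          apply hglb.2
          intro a ha
          obtain ⟨z, hz, hza, hza0⟩ := hdir a ha a₀ ha₀
          exact le_trans (hc ⟨hz, hza0⟩) hza
      have hsub : b - a₀ ≤ 0 := by
        apply ih S' hne' hdir' hglb'
        rintro a ⟨ha, haa0⟩
        have h1 : b ≤ n • a + a := by rw [← succ_nsmul]; exact hb a ha
        calc b - a₀ ≤ (n • a + a) - a₀ := sub_le_sub_right h1 _
          _ ≤ (n • a + a₀) - a₀ := sub_le_sub_right (add_le_add_right haa0 _) _
          _ = n • a := add_sub_cancel_right _ _
      exact sub_nonpos.mp hsub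
    exact hglb.2 key

lemma myAddInfLe (a b c : G) (ha : 0 ≤ a) (hb : 0 ≤ b) (hc : 0 ≤ c) :
    (a + b) ⊓ c ≤ a ⊓ c + b ⊓ c := by
  calc (a + b) ⊓ c ≤ ((a + b) ⊓ (c + b)) ⊓ ((a + c) ⊓ (c + c)) := by
        refine le_inf (le_inf inf_le_left (inf_le_right.trans (le_add_of_nonneg_right hb)))
          (le_inf (inf_le_right.trans (le_add_of_nonneg_left ha))
            (inf_le_right.trans (le_add_of_nonneg_left hc)))
    _ = a ⊓ c + b ⊓ c := by rw [← inf_add, ← inf_add, ← add_inf]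

lemma myInfNsmul (e y : G) (he : 0 ≤ e) (hy : 0 ≤ y) :
    ∀ m : ℕ, 1 ≤ m → (m • e) ⊓ y ≤ m • (e ⊓ y) := by
  intro m hm
  induction m with
  | zero => omega
  | succ m ih =>
    rcases Nat.eq_zero_or_pos m with h0 | h1
    · subst h0; simp
    · calc ((m + 1) • e) ⊓ y = (m • e + e) ⊓ y := by rw [succ_nsmul]
        _ ≤ (m • e) ⊓ y + e ⊓ y := myAddInfLe _ _ _ (nsmul_nonneg he m) he hy
        _ ≤ m • (e ⊓ y) + e ⊓ y := add_le_add_left (ih h1) _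
        _ = (m + 1) • (e ⊓ y) := (succ_nsmul _ _).symm

end LGroup

/-- If `e` is a `p`-unit, then `x_n →^{st-up} 0` iff `p(|x_n| ⊓ e) →^{st-o} 0` in `E`. -/
theorem statUPTendsto_iff_of_pUnit
    (p : X → E)
    (hp_pos : ∀ a : X, 0 ≤ p a)
    (hp_eq : ∀ a : X, p a = 0 ↔ a = 0)
    (hp_smul : ∀ (l : ℝ) (a : X), p (l • a) = |l| • p a)
    (hp_add : ∀ a b : X, p (a + b) ≤ p a + p b)
    (hp_mono : ∀ a b : X, |a| ≤ |b| → p a ≤ p b)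
    (e : X) (he : 0 ≤ e)
    (hunit : ∀ v : X, 0 ≤ v → OrderTendstoZero (fun n => p (v - (n • e) ⊓ v)))
    (x : ℕ → X) :
    (∀ u : X, 0 ≤ u → StatOTendstoZero (fun n => p (|x n| ⊓ u))) ↔
      StatOTendstoZero (fun n => p (|x n| ⊓ e)) := by

  constructor
  · intro h
    exact h e he
  · rintro ⟨q, ⟨K₁, hK₁d, hK₁mono, hK₁glb⟩, K₀, hK₀d, hK₀⟩ u hu
    obtain ⟨r, hr_anti, hr_glb, hr_bound⟩ := hunit u hu
    set K := K₀ ∩ K₁ with hKdef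
    have hKd : HasDensityOne K := myDensityInter hK₀d hK₁d
    have hq0 : ∀ k ∈ K₁, 0 ≤ q k := fun k hk => hK₁glb.1 ⟨k, hk, rfl⟩
    have hr0 : ∀ m, 0 ≤ r m := fun m => (abs_nonneg _).trans (hr_bound m)
    have hkey : ∀ k ∈ K, ∀ m : ℕ, 1 ≤ m → p (|x k| ⊓ u) ≤ r m + m • q k := by
      intro k hk m hm
      set y := |x k| with hydef
      have hy0 : 0 ≤ y := abs_nonneg _
      have hey0 : 0 ≤ e ⊓ y := le_inf he hy0
      have hstep : y ⊓ u ≤ (u - (m • e) ⊓ u) + m • (e ⊓ y) := by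
        have hdecomp : y ⊓ u = (0 ⊔ (y ⊓ u - m • e)) + (y ⊓ u) ⊓ (m • e) := by
          have h1 : y ⊓ u - (y ⊓ u) ⊓ (m • e) = 0 ⊔ (y ⊓ u - m • e) := by
            rw [sub_inf, sub_self]
          rw [← h1, sub_add_cancel]
        calc y ⊓ u = (0 ⊔ (y ⊓ u - m • e)) + (y ⊓ u) ⊓ (m • e) := hdecomp
          _ ≤ (0 ⊔ (u - m • e)) + (m • e) ⊓ y := by
              refine add_le_add (sup_le_sup_left (sub_le_sub_right inf_le_right _) 0) ?_
              exact le_inf inf_le_right (inf_le_left.trans inf_le_left)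
          _ ≤ (u - (m • e) ⊓ u) + m • (e ⊓ y) := by
              have h2 : 0 ⊔ (u - m • e) = u - (m • e) ⊓ u := by
                rw [sub_inf, sub_self, sup_comm]
              rw [h2]
              exact add_le_add_right (myInfNsmul e y he hy0 m hm) _
      have hyu0 : 0 ≤ y ⊓ u := le_inf hy0 hu
      have hz0 : 0 ≤ (u - (m • e) ⊓ u) + m • (e ⊓ y) :=
        add_nonneg (sub_nonneg.mpr inf_le_right) (nsmul_nonneg hey0 m)
      have hp1 : p (y ⊓ u) ≤ p ((u - (m • e) ⊓ u) + m • (e ⊓ y)) := by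
        apply hp_mono
        rw [abs_of_nonneg hyu0, abs_of_nonneg hz0]
        exact hstep
      have hp2 : p (m • (e ⊓ y)) = m • p (e ⊓ y) := by
        rw [← Nat.cast_smul_eq_nsmul ℝ m (e ⊓ y), hp_smul,
          abs_of_nonneg (Nat.cast_nonneg m), Nat.cast_smul_eq_nsmul]
      have hp3 : p (e ⊓ y) ≤ q k := by
        rw [inf_comm]
        exact (le_abs_self _).trans (hK₀ k hk.1)
      calc p (y ⊓ u) ≤ p (u - (m • e) ⊓ u) + p (m • (e ⊓ y)) := hp1.trans (hp_add _ _)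
        _ ≤ r m + m • q k := by
            refine add_le_add ((le_abs_self _).trans (hr_bound m)) ?_
            rw [hp2]
            exact nsmul_le_nsmul_right hp3 m
    have hterm_nonneg : ∀ k ∈ K₁, ∀ m : ℕ, 0 ≤ r m + m • q k :=
      fun k hk m => add_nonneg (hr0 m) (nsmul_nonneg (hq0 k hk) m)
    refine ⟨fun k => (Finset.Icc 1 (k + 1)).inf' ⟨1, by simp⟩ (fun m => r m + m • q k),
      ⟨K, hKd, ?_, ?_⟩, K, hKd, ?_⟩
    · -- monotone along K
      intro i hi j hj hij
      apply Finset.le_inf'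
      intro m hm
      have hm' : m ∈ Finset.Icc 1 (j + 1) := by
        rw [Finset.mem_Icc] at hm ⊢
        omega
      exact (Finset.inf'_le _ hm').trans
        (add_le_add_right (nsmul_le_nsmul_right (hK₁mono hi.2 hj.2 hij) m) _)
    · -- GLB is 0
      constructor
      · rintro v ⟨k, hk, rfl⟩
        exact Finset.le_inf' _ _ fun m _ => hterm_nonneg k hk.2 m
      · intro b hb
        have hble : ∀ m : ℕ, 1 ≤ m → b ≤ r m := by
          intro m hm
          rw [← sub_nonpos]
          set S := q '' {k | k ∈ K ∧ m ≤ k + 1} with hSdef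
          obtain ⟨k₀, hk₀K, hk₀ge⟩ := myDensityUnbounded hKd m
          have hne : S.Nonempty := ⟨q k₀, k₀, ⟨hk₀K, by omega⟩, rfl⟩
          have hdir : DirectedOn (· ≥ ·) S := by
            rintro _ ⟨k1, ⟨hk1, hm1⟩, rfl⟩ _ ⟨k2, ⟨hk2, hm2⟩, rfl⟩
            rcases le_total k1 k2 with h | h
            · exact ⟨q k2, ⟨k2, ⟨hk2, hm2⟩, rfl⟩, hK₁mono hk1.2 hk2.2 h, le_rfl⟩
            · exact ⟨q k1, ⟨k1, ⟨hk1, hm1⟩, rfl⟩, le_rfl, hK₁mono hk2.2 hk1.2 h⟩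
          have hglbS : IsGLB S 0 := by
            constructor
            · rintro _ ⟨k, ⟨hk, _⟩, rfl⟩
              exact hq0 k hk.2
            · intro c hc
              apply hK₁glb.2
              rintro _ ⟨j, hj, rfl⟩
              obtain ⟨k, hkK, hkge⟩ := myDensityUnbounded hKd (max j m)
              have h1 : c ≤ q k := hc ⟨k, ⟨hkK, by omega⟩, rfl⟩
              exact h1.trans (hK₁mono hj hkK.2 ((le_max_left _ _).trans hkge))
          apply myNsmulGLB m S hne hdir hglbS
          rintro _ ⟨k, ⟨hk, hmk⟩, rfl⟩
          have h1 : b ≤ (Finset.Icc 1 (k + 1)).inf' ⟨1, by simp⟩ (fun m => r m + m • q k) :=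
            hb ⟨k, hk, rfl⟩
          have h2 : (Finset.Icc 1 (k + 1)).inf' ⟨1, by simp⟩ (fun m => r m + m • q k)
              ≤ r m + m • q k := Finset.inf'_le _ (Finset.mem_Icc.mpr ⟨hm, hmk⟩)
          exact sub_le_iff_le_add'.mpr (h1.trans h2)
        apply hr_glb.2
        rintro _ ⟨m, rfl⟩
        rcases Nat.eq_zero_or_pos m with h0 | h1
        · subst h0
          exact (hble 1 le_rfl).trans (hr_anti (Nat.zero_le 1))
        · exact hble m h1
    · -- domination along K
      intro k hk
      rw [abs_of_nonneg (hp_pos _)]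
      exact Finset.le_inf' _ _ fun m hm => hkey k hk m (Finset.mem_Icc.mp hm).1
end

section
/- Bands are closed under statistical unbounded p-convergence: if B is a band in a lattice-normed Riesz space X, (b_n) is a sequence in B, and b_n →^{st-up} x, then x ∈ B. -/
open Filter Set
open scoped Classical

variable {X E : Type*} [Lattice X] [AddCommGroup X] [Module ℝ X]
  [CovariantClass X X (· + ·) (· ≤ ·)]
  [Lattice E] [AddCommGroup E] [Module ℝ E]
  [CovariantClass E E (· + ·) (· ≤ ·)]

/-- The disjoint complement `A^d` of a subset of a Riesz space. -/
def disjComp (A : Set X) : Set X := {z : X | ∀ a ∈ A, |z| ⊓ |a| = 0}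

/-- Two density-one sets intersect in an unbounded set. -/
lemma densityOne_inter_unbounded {K K' : Set ℕ} (hK : HasDensityOne K)
    (hK' : HasDensityOne K') (N : ℕ) : ∃ k, N ≤ k ∧ k ∈ K ∧ k ∈ K' := by
  by_contra h
  push_neg at h
  have key : ∀ n : ℕ, 1 ≤ n →
      natDensityRatio K n + natDensityRatio K' n ≤ 1 + (N : ℝ) / n := by
    intro n hn
    have hnpos : (0:ℝ) < n := by exact_mod_cast hn
    set s := (Finset.range n).filter (· ∈ K) with hs
    set t := (Finset.range n).filter (· ∈ K') with ht
    have hinter : s ∩ t ⊆ Finset.range N := by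
      intro k hk
      simp only [hs, ht, Finset.mem_inter, Finset.mem_filter, Finset.mem_range] at hk
      simp only [Finset.mem_range]
      by_contra hkN
      push_neg at hkN
      exact (h k hkN hk.1.2) hk.2.2
    have hunion : s ∪ t ⊆ Finset.range n := by
      intro k hk
      simp only [hs, ht, Finset.mem_union, Finset.mem_filter] at hk
      rcases hk with h1 | h1 <;> exact h1.1
    have hcard : s.card + t.card ≤ n + N := by
      have heq := Finset.card_union_add_card_inter s t
      have h1 : (s ∪ t).card ≤ n := by
        simpa using Finset.card_le_card hunion
      have h2 : (s ∩ t).card ≤ N := by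
        simpa using Finset.card_le_card hinter
      omega
    have hcardR : (s.card : ℝ) + t.card ≤ (n : ℝ) + N := by exact_mod_cast hcard
    have hdiv : ((s.card : ℝ) + t.card) / n ≤ ((n : ℝ) + N) / n :=
      div_le_div_of_nonneg_right hcardR hnpos.le
    calc natDensityRatio K n + natDensityRatio K' n
        = ((s.card : ℝ) + t.card) / n := by
          simp [natDensityRatio, hs, ht, add_div]
      _ ≤ ((n : ℝ) + N) / n := hdiv
      _ = 1 + (N : ℝ) / n := by
          rw [add_div, div_self (ne_of_gt hnpos)]
  have h2 : Tendsto (fun n : ℕ => natDensityRatio K n + natDensityRatio K' n)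
      atTop (nhds 2) := by
    have := hK.add hK'
    norm_num at this
    exact this
  have h1 : Tendsto (fun n : ℕ => 1 + (N : ℝ) / n) atTop (nhds 1) := by
    have h0 : Tendsto (fun n : ℕ => (N : ℝ) / n) atTop (nhds 0) :=
      tendsto_const_div_atTop_nhds_zero_nat (N : ℝ)
    simpa using (tendsto_const_nhds.add h0)
  have hle : (2:ℝ) ≤ 1 :=
    le_of_tendsto_of_tendsto' h2 h1 (fun n => by
      rcases Nat.eq_zero_or_pos n with h0 | h0
      · subst h0
        simp [natDensityRatio]
      · exact key n h0)
  linarith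

/-- `(a + b) ⊓ c ≤ a ⊓ c + b ⊓ c` for nonnegative elements of a lattice-ordered group. -/
lemma add_inf_le_inf_add_inf {G : Type*} [Lattice G] [AddCommGroup G]
    [CovariantClass G G (· + ·) (· ≤ ·)] {a b c : G}
    (ha : 0 ≤ a) (hb : 0 ≤ b) (hc : 0 ≤ c) :
    (a + b) ⊓ c ≤ a ⊓ c + b ⊓ c := by
  set d := (a + b) ⊓ c with hd
  have hdb : d - b ≤ a ⊓ c := by
    refine le_inf ?_ ?_
    · have : d ≤ a + b := inf_le_left
      exact sub_le_iff_le_add.mpr this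
    · have h1 : d ≤ c := inf_le_right
      have h2 : d - b ≤ d := sub_le_self d hb
      exact h2.trans h1
  have hdc : d - c ≤ a ⊓ c := by
    have h1 : d - c ≤ 0 := sub_nonpos.mpr inf_le_right
    exact h1.trans (le_inf ha hc)
  have hsub : d - b ⊓ c = (d - b) ⊔ (d - c) := by
    rw [sub_eq_add_neg, neg_inf, add_sup, ← sub_eq_add_neg, ← sub_eq_add_neg]
  have : d - b ⊓ c ≤ a ⊓ c := by
    rw [hsub]; exact sup_le hdb hdc
  have hfin := sub_le_iff_le_add.mp this
  calc (a + b) ⊓ c = d := rfl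
    _ ≤ a ⊓ c + b ⊓ c := by exact hfin

set_option maxHeartbeats 1000000 in
/-- Bands (`B = B^{dd}`) are closed under statistical unbounded p-convergence. -/
theorem statUPTendsto_mem_band
    (p : X → E)
    (hp_pos : ∀ a : X, 0 ≤ p a)
    (hp_eq : ∀ a : X, p a = 0 ↔ a = 0)
    (hp_smul : ∀ (l : ℝ) (a : X), p (l • a) = |l| • p a)
    (hp_add : ∀ a b : X, p (a + b) ≤ p a + p b)
    (hp_mono : ∀ a b : X, |a| ≤ |b| → p a ≤ p b)
    (B : Set X) (hB : B = disjComp (disjComp B))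
    (b : ℕ → X) (hb : ∀ n, b n ∈ B)
    (x : X) (hx : StatUPTendsto p b x) :
    x ∈ B := by
  rw [hB]
  intro z hz
  -- `z ∈ disjComp B`, show `|x| ⊓ |z| = 0`.
  obtain ⟨q, hq, K, hKd, hKle⟩ := hx |z| (abs_nonneg z)
  obtain ⟨K', hK'd, hK'anti, hK'glb⟩ := hq
  set c := p (|x| ⊓ |z|) with hc
  have hxz_nonneg : (0:X) ≤ |x| ⊓ |z| := le_inf (abs_nonneg x) (abs_nonneg z)
  -- key pointwise bound for k ∈ K
  have hkey : ∀ k ∈ K, c ≤ p (q k) := by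
    intro k hk
    have hdisj : |z| ⊓ |b k| = 0 := hz (b k) (hb k)
    have htri : |x| ≤ |b k - x| + |b k| := by
      have : x = -(b k - x) + b k := by abel
      calc |x| = |(-(b k - x)) + b k| := by rw [← this]
        _ ≤ |(-(b k - x))| + |b k| := abs_add_le _ _
        _ = |b k - x| + |b k| := by rw [abs_neg]
    have h1 : |x| ⊓ |z| ≤ (|b k - x| + |b k|) ⊓ |z| :=
      inf_le_inf_right _ htri
    have h2 : (|b k - x| + |b k|) ⊓ |z| ≤ |b k - x| ⊓ |z| + |b k| ⊓ |z| :=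
      add_inf_le_inf_add_inf (abs_nonneg _) (abs_nonneg _) (abs_nonneg _)
    have h3 : |b k| ⊓ |z| = 0 := by rw [inf_comm]; exact hdisj
    have h4 : |x| ⊓ |z| ≤ |b k - x| ⊓ |z| := by
      calc |x| ⊓ |z| ≤ |b k - x| ⊓ |z| + |b k| ⊓ |z| := h1.trans h2
        _ = |b k - x| ⊓ |z| := by rw [h3, add_zero]
    have h5 : c ≤ p (|b k - x| ⊓ |z|) := by
      apply hp_mono
      rw [abs_of_nonneg hxz_nonneg,
        abs_of_nonneg (le_inf (abs_nonneg _) (abs_nonneg _))]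
      exact h4
    exact h5.trans (hKle k hk)
  -- `c` is a lower bound of the image over `K'`
  have hlb : c ∈ lowerBounds ((fun n => p (q n)) '' K') := by
    rintro _ ⟨j, hj, rfl⟩
    obtain ⟨k, hjk, hkK, hkK'⟩ := densityOne_inter_unbounded hKd hK'd j
    exact (hkey k hkK).trans (hK'anti hj hkK' hjk)
  have hc0 : c ≤ 0 := hK'glb.2 hlb
  have hceq : c = 0 := le_antisymm hc0 (hp_pos _)
  exact (hp_eq _).mp hceq
end
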